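/- Let n be a natural number, let B be an n×n real matrix, and let K₂, K₃ ≥ 0 be real numbers such that both B + K₂·I and K₃·I − B are positive semidefinite. Then for every n×n real matrix A and every real δ > 0, one has ∑_{i,j} B_{ij}·A_{ij} ≤ δ·∑_{i,j} (A_{ij})² + (n/(4δ))·(max{K₂, K₃})². -/

import Mathlib

/-!
The Schur product theorem makes the Frobenius inner product of two positive semidefinite
matrices nonnegative. Applied to `K • 1 - B` and `K • 1 + B` with `K = max K₂ K₃`, it gives
`∑ B i j ^ 2 ≤ n K ^ 2`, and Young's inequality `b a ≤ δ a ^ 2 + b ^ 2 / (4 δ)`, summed over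
the entries, finishes the proof.
-/

open Matrix

theorem mul_le_mul_sq_add_sq_div_four_mul {a b δ : ℝ} (hδ : 0 < δ) :
    b * a ≤ δ * a ^ 2 + b ^ 2 / (4 * δ) := by
  have hsq : δ * a ^ 2 + b ^ 2 / (4 * δ) - b * a = (2 * δ * a - b) ^ 2 / (4 * δ) := by
    field_simp
    ring
  rw [← sub_nonneg, hsq]
  positivity

theorem Matrix.sum_mul_le_mul_sum_sq_add_sum_sq_div {m n : Type*} [Fintype m] [Fintype n]
    (A B : Matrix m n ℝ) {δ : ℝ} (hδ : 0 < δ) :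
    ∑ i, ∑ j, B i j * A i j ≤
      δ * ∑ i, ∑ j, A i j ^ 2 + (∑ i, ∑ j, B i j ^ 2) / (4 * δ) := by
  simp only [Finset.mul_sum, Finset.sum_div, ← Finset.sum_add_distrib]
  exact Finset.sum_le_sum fun i _ ↦ Finset.sum_le_sum fun j _ ↦
    mul_le_mul_sq_add_sq_div_four_mul hδ

theorem Matrix.PosSemidef.sum_mul_nonneg {ι : Type*} [Fintype ι] {P Q : Matrix ι ι ℝ}
    (hP : P.PosSemidef) (hQ : Q.PosSemidef) : 0 ≤ ∑ i, ∑ j, P i j * Q i j := by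
  simpa [dotProduct, mulVec, Finset.mul_sum] using
    (hP.hadamard hQ).dotProduct_mulVec_nonneg (fun _ ↦ 1)

section Bounds

variable {ι : Type*} [DecidableEq ι] {B : Matrix ι ι ℝ} {a b : ℝ}

theorem Matrix.PosSemidef.smul_one_sub_of_le (hB : (a • 1 - B).PosSemidef) (hab : a ≤ b) :
    (b • 1 - B).PosSemidef := by
  convert (PosSemidef.one.smul (sub_nonneg.2 hab)).add hB using 1
  rw [sub_smul]
  abel

theorem Matrix.PosSemidef.smul_one_add_of_le (hB : (B + a • 1).PosSemidef) (hab : a ≤ b) :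
    (b • 1 + B).PosSemidef := by
  convert (PosSemidef.one.smul (sub_nonneg.2 hab)).add hB using 1
  rw [sub_smul]
  abel

theorem Matrix.sum_sq_le_card_mul_sq_of_posSemidef [Fintype ι] {K : ℝ}
    (hlo : (K • 1 + B).PosSemidef) (hhi : (K • 1 - B).PosSemidef) :
    ∑ i, ∑ j, B i j ^ 2 ≤ Fintype.card ι * K ^ 2 := by
  have hexpand : ∑ i, ∑ j, (K • 1 - B) i j * (K • 1 + B) i j
      = Fintype.card ι * K ^ 2 - ∑ i, ∑ j, B i j ^ 2 := by
    simp only [sub_apply, add_apply, smul_apply, one_apply, smul_eq_mul, mul_ite, mul_one,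
      mul_zero, mul_add, sub_mul, ite_mul, zero_mul, Finset.sum_add_distrib,
      Finset.sum_sub_distrib, Finset.sum_ite_eq, Finset.mem_univ, ↓reduceIte, Finset.sum_const,
      Finset.card_univ, nsmul_eq_mul, pow_two]
    simp only [← Finset.sum_mul, ← Finset.mul_sum]
    ring
  linarith [hhi.sum_mul_nonneg hlo]

end Bounds

theorem frobenius_inner_bound_of_psd_general (n : ℕ) (B : Matrix (Fin n) (Fin n) ℝ) (K₂ K₃ : ℝ)
    (h₁ : (B + K₂ • (1 : Matrix (Fin n) (Fin n) ℝ)).PosSemidef)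
    (h₂ : (K₃ • (1 : Matrix (Fin n) (Fin n) ℝ) - B).PosSemidef)
    (A : Matrix (Fin n) (Fin n) ℝ) (δ : ℝ) (hδ : 0 < δ) :
    ∑ i, ∑ j, B i j * A i j ≤
      δ * ∑ i, ∑ j, (A i j) ^ 2 + (n / (4 * δ)) * (max K₂ K₃) ^ 2 := by
  have hB : ∑ i, ∑ j, B i j ^ 2 ≤ n * max K₂ K₃ ^ 2 := by
    simpa using sum_sq_le_card_mul_sq_of_posSemidef
      (h₁.smul_one_add_of_le (le_max_left K₂ K₃)) (h₂.smul_one_sub_of_le (le_max_right K₂ K₃))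
  calc ∑ i, ∑ j, B i j * A i j
      ≤ δ * ∑ i, ∑ j, A i j ^ 2 + (∑ i, ∑ j, B i j ^ 2) / (4 * δ) :=
        sum_mul_le_mul_sum_sq_add_sum_sq_div A B hδ
    _ ≤ δ * ∑ i, ∑ j, A i j ^ 2 + n * max K₂ K₃ ^ 2 / (4 * δ) := by gcongr
    _ = δ * ∑ i, ∑ j, A i j ^ 2 + (n / (4 * δ)) * max K₂ K₃ ^ 2 := by ring

theorem frobenius_inner_bound_of_psd (n : ℕ) (B : Matrix (Fin n) (Fin n) ℝ) (K₂ K₃ : ℝ)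
    (hK₂ : 0 ≤ K₂) (hK₃ : 0 ≤ K₃)
    (h₁ : (B + K₂ • (1 : Matrix (Fin n) (Fin n) ℝ)).PosSemidef)
    (h₂ : (K₃ • (1 : Matrix (Fin n) (Fin n) ℝ) - B).PosSemidef)
    (A : Matrix (Fin n) (Fin n) ℝ) (δ : ℝ) (hδ : 0 < δ) :
    ∑ i, ∑ j, B i j * A i j ≤
      δ * ∑ i, ∑ j, (A i j) ^ 2 + (n / (4 * δ)) * (max K₂ K₃) ^ 2 :=
  frobenius_inner_bound_of_psd_general n B K₂ K₃ h₁ h₂ A δ hδ
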